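/- arXiv:0911.0370 — 6 statements merged into one kernel-verified Lean document; each statement's English description precedes it below -/
import Mathlib

section
/- Let (a_k) be a sequence in X with d(o, a_k) → ∞ such that the functions ξ_{a_k} converge pointwise on X to a function ξ : X → ℝ. Let p ∈ X, for each k let γ_k be a geodesic from p to a_k, and suppose γ is a geodesic ray from p such that for every s ≥ 0 one has γ_k(s) → γ(s) as k → ∞. Then for every x ∈ X and every s ≥ 0, ξ(x) ≤ ξ(p) + d(x, γ(s)) − s. -/
/-!
Along the geodesic `γₖ` from `p` to `aₖ`, the point `γₖ(s)` lies at distance `d(p, aₖ) − s`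
from `aₖ`, so the triangle inequality through `γₖ(s)` gives
`d(x, aₖ) − d(o, aₖ) ≤ (d(p, aₖ) − d(o, aₖ)) + d(x, γₖ(s)) − s` as soon as `d(p, aₖ) ≥ s`,
which holds eventually since `aₖ` escapes to infinity. Letting `k → ∞` yields the claim.
-/

open Filter Metric Topology

section IsometryOnIcc

variable {X : Type*} [PseudoMetricSpace X]

lemma dist_apply_of_isometryOn_Icc {c : ℝ → X} {L s : ℝ}
    (hc : ∀ s ∈ Set.Icc 0 L, ∀ t ∈ Set.Icc 0 L, dist (c s) (c t) = |s - t|)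
    (hs : s ∈ Set.Icc 0 L) :
    dist (c s) (c L) = L - s := by
  rw [hc s hs L ⟨hs.1.trans hs.2, le_rfl⟩, abs_of_nonpos (by linarith [hs.2])]
  ring

lemma dist_sub_dist_le_of_isometryOn_Icc {c : ℝ → X} {L s : ℝ}
    (hc : ∀ s ∈ Set.Icc 0 L, ∀ t ∈ Set.Icc 0 L, dist (c s) (c t) = |s - t|)
    (hs : s ∈ Set.Icc 0 L) (x : X) :
    dist x (c L) - L ≤ dist x (c s) - s := by
  have := dist_triangle x (c s) (c L)
  rw [dist_apply_of_isometryOn_Icc hc hs] at this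
  linarith

end IsometryOnIcc

theorem xi_le_of_ray_general {X : Type*} [MetricSpace X] (o : X)
    (a : ℕ → X) (ha : Tendsto (fun k => dist o (a k)) atTop atTop)
    (ξ : X → ℝ)
    (hξ : ∀ z : X, Tendsto (fun k => dist z (a k) - dist o (a k)) atTop (𝓝 (ξ z)))
    (p : X) (γk : ℕ → ℝ → X)
    (hγk1 : ∀ k, γk k (dist p (a k)) = a k)
    (hγkgeo : ∀ k, ∀ s ∈ Set.Icc 0 (dist p (a k)), ∀ t ∈ Set.Icc 0 (dist p (a k)),
      dist (γk k s) (γk k t) = |s - t|)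
    (γ : ℝ → X)
    (hconv : ∀ s : ℝ, 0 ≤ s → Tendsto (fun k => γk k s) atTop (𝓝 (γ s))) :
    ∀ x : X, ∀ s : ℝ, 0 ≤ s → ξ x ≤ ξ p + dist x (γ s) - s := by
  intro x s hs
  have hp : Tendsto (fun k => dist p (a k)) atTop atTop :=
    (tendsto_dist_left_atTop_iff p).2 ((tendsto_dist_left_atTop_iff o).1 ha)
  have hbound : Tendsto (fun k => (dist p (a k) - dist o (a k)) + dist x (γk k s) - s)
      atTop (𝓝 (ξ p + dist x (γ s) - s)) :=
    ((hξ p).add (tendsto_const_nhds.dist (hconv s hs))).sub_const s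
  refine le_of_tendsto_of_tendsto (hξ x) hbound ?_
  filter_upwards [hp.eventually_ge_atTop s] with k hk
  have := dist_sub_dist_le_of_isometryOn_Icc (hγkgeo k) ⟨hs, hk⟩ x
  rw [hγk1] at this
  linarith

/-- Lemma 2.1(2): if `ξ` is a horofunction, the pointwise limit of `ξ_{a_k}` with
`d(o, a_k) → ∞`, and `γ` is a geodesic ray from `p` which is the limit of geodesics
`γ_k` from `p` to `a_k`, then `ξ(x) ≤ ξ(p) + d(x, γ(s)) − s` for all `x` and `s ≥ 0`. -/
theorem xi_le_of_ray {X : Type*} [MetricSpace X] (o : X)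
    (a : ℕ → X) (ha : Tendsto (fun k => dist o (a k)) atTop atTop)
    (ξ : X → ℝ)
    (hξ : ∀ z : X, Tendsto (fun k => dist z (a k) - dist o (a k)) atTop (𝓝 (ξ z)))
    (p : X) (γk : ℕ → ℝ → X)
    (hγk0 : ∀ k, γk k 0 = p)
    (hγk1 : ∀ k, γk k (dist p (a k)) = a k)
    (hγkgeo : ∀ k, ∀ s ∈ Set.Icc 0 (dist p (a k)), ∀ t ∈ Set.Icc 0 (dist p (a k)),
      dist (γk k s) (γk k t) = |s - t|)
    (γ : ℝ → X) (hγ0 : γ 0 = p)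
    (hγray : ∀ s t : ℝ, 0 ≤ s → 0 ≤ t → dist (γ s) (γ t) = |s - t|)
    (hconv : ∀ s : ℝ, 0 ≤ s → Tendsto (fun k => γk k s) atTop (𝓝 (γ s))) :
    ∀ x : X, ∀ s : ℝ, 0 ≤ s → ξ x ≤ ξ p + dist x (γ s) - s :=
  xi_le_of_ray_general o a ha ξ hξ p γk hγk1 hγkgeo γ hconv
end

section
/- Let (a_k) be a sequence in X with d(o, a_k) → ∞ such that the functions ξ_{a_k} converge pointwise on X to a function ξ : X → ℝ. Let p ∈ X, for each k let γ_k be a geodesic from p to a_k, and suppose γ is a geodesic ray from p such that for every s ≥ 0 one has γ_k(s) → γ(s) as k → ∞. Then for every x ∈ X, ξ(x) ≤ ξ(p) + b_γ(x), where b_γ is the Busemann function of the ray γ. -/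
/-! For `s ≥ 0` and large `k`, the point `γₖ(s)` lies on a geodesic from `p` to `aₖ`, so
`d(x, aₖ) ≤ d(x, γₖ(s)) + d(p, aₖ) - s`. Subtracting `d(o, aₖ)` and letting `k → ∞` gives
`ξ(x) ≤ ξ(p) + d(x, γ(s)) - s`, and letting `s → ∞` gives the Busemann function. -/

open Filter Metric Topology

section

variable {X : Type*} [PseudoMetricSpace X]

theorem dist_endpoint_eq_of_isometryOn_Icc {c : ℝ → X} {L s : ℝ} {q : X} (hq : c L = q)
    (hc : ∀ s ∈ Set.Icc 0 L, ∀ t ∈ Set.Icc 0 L, dist (c s) (c t) = |s - t|)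
    (hs : s ∈ Set.Icc 0 L) : dist (c s) q = L - s := by
  rw [← hq, hc s hs L ⟨hs.1.trans hs.2, le_rfl⟩, abs_sub_comm,
    abs_of_nonneg (sub_nonneg.2 hs.2)]

theorem Filter.Tendsto.dist_atTop_of_dist_atTop {ι : Type*} {l : Filter ι} {a : ι → X}
    {o : X} (ha : Tendsto (fun k => dist o (a k)) l atTop) (p : X) :
    Tendsto (fun k => dist p (a k)) l atTop :=
  tendsto_atTop_mono (fun k => by linarith [dist_triangle o p (a k)])
    (tendsto_atTop_add_const_right _ (-dist o p) ha)

theorem le_add_dist_sub_of_tendsto {ι : Type*} {l : Filter ι} [l.NeBot] {a c' : ι → X}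
    {o p x c : X} {ξx ξp s : ℝ}
    (hx : Tendsto (fun k => dist x (a k) - dist o (a k)) l (𝓝 ξx))
    (hp : Tendsto (fun k => dist p (a k) - dist o (a k)) l (𝓝 ξp))
    (hc : Tendsto c' l (𝓝 c)) (hclose : ∀ᶠ k in l, dist (c' k) (a k) ≤ dist p (a k) - s) :
    ξx ≤ ξp + (dist x c - s) := by
  have hbound : Tendsto (fun k => dist x (c' k) + (dist p (a k) - dist o (a k)) - s) l
      (𝓝 (dist x c + ξp - s)) :=
    ((tendsto_const_nhds.dist hc).add hp).sub_const s
  have := le_of_tendsto_of_tendsto hx hbound <| hclose.mono fun k hk => by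
    linarith [dist_triangle x (c' k) (a k)]
  linarith

end

theorem xi_le_busemann_general {X : Type*} [MetricSpace X] (o : X)
    (a : ℕ → X) (ha : Tendsto (fun k => dist o (a k)) atTop atTop)
    (ξ : X → ℝ)
    (hξ : ∀ z : X, Tendsto (fun k => dist z (a k) - dist o (a k)) atTop (𝓝 (ξ z)))
    (p : X) (γk : ℕ → ℝ → X)
    (hγk1 : ∀ k, γk k (dist p (a k)) = a k)
    (hγkgeo : ∀ k, ∀ s ∈ Set.Icc 0 (dist p (a k)), ∀ t ∈ Set.Icc 0 (dist p (a k)),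
      dist (γk k s) (γk k t) = |s - t|)
    (γ : ℝ → X)
    (hconv : ∀ s : ℝ, 0 ≤ s → Tendsto (fun k => γk k s) atTop (𝓝 (γ s))) :
    ∀ x : X, ∀ b : ℝ, Tendsto (fun s : ℝ => dist x (γ s) - s) atTop (𝓝 b) →
      ξ x ≤ ξ p + b := by
  intro x b hb
  refine ge_of_tendsto (hb.const_add (ξ p)) ?_
  filter_upwards [eventually_ge_atTop 0] with s hs
  refine le_add_dist_sub_of_tendsto (hξ x) (hξ p) (hconv s hs) ?_
  filter_upwards [(ha.dist_atTop_of_dist_atTop p).eventually_ge_atTop s] with k hk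
  exact (dist_endpoint_eq_of_isometryOn_Icc (hγk1 k) (hγkgeo k) ⟨hs, hk⟩).le

/-- Lemma 2.1(3): if `ξ` is a horofunction, the pointwise limit of `ξ_{a_k}` with
`d(o, a_k) → ∞`, and `γ` is a geodesic ray from `p` which is the limit of geodesics
`γ_k` from `p` to `a_k`, then `ξ(x) ≤ ξ(p) + b_γ(x)` where `b_γ` is the Busemann
function of the ray `γ`, i.e. `b_γ(x) = lim_{s→∞} (d(x, γ(s)) − s)`. -/
theorem xi_le_busemann {X : Type*} [MetricSpace X] (o : X)
    (a : ℕ → X) (ha : Tendsto (fun k => dist o (a k)) atTop atTop)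
    (ξ : X → ℝ)
    (hξ : ∀ z : X, Tendsto (fun k => dist z (a k) - dist o (a k)) atTop (𝓝 (ξ z)))
    (p : X) (γk : ℕ → ℝ → X)
    (hγk0 : ∀ k, γk k 0 = p)
    (hγk1 : ∀ k, γk k (dist p (a k)) = a k)
    (hγkgeo : ∀ k, ∀ s ∈ Set.Icc 0 (dist p (a k)), ∀ t ∈ Set.Icc 0 (dist p (a k)),
      dist (γk k s) (γk k t) = |s - t|)
    (γ : ℝ → X) (hγ0 : γ 0 = p)
    (hγray : ∀ s t : ℝ, 0 ≤ s → 0 ≤ t → dist (γ s) (γ t) = |s - t|)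
    (hconv : ∀ s : ℝ, 0 ≤ s → Tendsto (fun k => γk k s) atTop (𝓝 (γ s))) :
    ∀ x : X, ∀ b : ℝ, Tendsto (fun s : ℝ => dist x (γ s) - s) atTop (𝓝 b) →
      ξ x ≤ ξ p + b :=
  xi_le_busemann_general o a ha ξ hξ p γk hγk1 hγkgeo γ hconv
end

section
/- Assume X is proper (closed bounded sets are compact) and geodesic (any two points are joined by a geodesic). Let ξ : X → ℝ be a pointwise limit of functions ξ_{a_k} for some sequence (a_k) in X with d(o, a_k) → ∞. Then for every p ∈ X there exists a geodesic ray γ from p such that ξ(γ(s)) = ξ(p) − s for all s ≥ 0. -/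
open Filter Metric Topology

/-- In a proper geodesic metric space, every horofunction `ξ` (a pointwise limit of
`ξ_{a_k}` with `d(o, a_k) → ∞`) satisfies: for every `p` there is a geodesic ray `γ`
from `p` along which `ξ(γ(s)) = ξ(p) − s` for all `s ≥ 0`. -/
theorem exists_ray_of_horofunction {X : Type*} [MetricSpace X] [ProperSpace X] (o : X)
    (hgeo : ∀ p q : X, ∃ γ : ℝ → X, γ 0 = p ∧ γ (dist p q) = q ∧
      ∀ s ∈ Set.Icc 0 (dist p q), ∀ t ∈ Set.Icc 0 (dist p q),
        dist (γ s) (γ t) = |s - t|)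
    (ξ : X → ℝ)
    (hξ : ∃ a : ℕ → X, Tendsto (fun k => dist o (a k)) atTop atTop ∧
      ∀ z : X, Tendsto (fun k => dist z (a k) - dist o (a k)) atTop (𝓝 (ξ z))) :
    ∀ p : X, ∃ γ : ℝ → X, γ 0 = p ∧
      (∀ s t : ℝ, 0 ≤ s → 0 ≤ t → dist (γ s) (γ t) = |s - t|) ∧
      ∀ s : ℝ, 0 ≤ s → ξ (γ s) = ξ p - s := by
  obtain ⟨a, haD, hlim⟩ := hξ
  intro p
  choose γg hγ0 hγD hγiso using fun k => hgeo p (a k)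
  set D : ℕ → ℝ := fun k => dist p (a k) with hDdef
  have hD0 : ∀ k, 0 ≤ D k := fun k => dist_nonneg
  have hDtop : Tendsto D atTop atTop := by
    apply tendsto_atTop_mono (fun k => ?_)
      (tendsto_atTop_add_const_right _ (-(dist o p)) haD)
    have h := dist_triangle o p (a k)
    simp only [hDdef]
    linarith
  -- index type: nonnegative rationals
  let Q := {q : ℚ // (0 : ℝ) ≤ (q : ℝ)}
  let g : ℕ → Q → X := fun k q => γg k (min (q.1 : ℝ) (D k))
  have hgp : ∀ k (q : Q), dist (g k q) p = min (q.1 : ℝ) (D k) := by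
    intro k q
    have h1 : min (q.1 : ℝ) (D k) ∈ Set.Icc (0:ℝ) (D k) :=
      ⟨le_min q.2 (hD0 k), min_le_right _ _⟩
    have h0 : (0:ℝ) ∈ Set.Icc (0:ℝ) (D k) := ⟨le_refl _, hD0 k⟩
    have h := hγiso k _ h1 _ h0
    rw [hγ0 k] at h
    simpa [abs_of_nonneg h1.1] using h
  have hmem : ∀ k, g k ∈ Set.pi (Set.univ : Set Q) (fun q => closedBall p (q.1 : ℝ)) := by
    intro k
    intro q _
    rw [mem_closedBall, hgp k q]
    exact min_le_left _ _
  have hK : IsCompact (Set.pi (Set.univ : Set Q) (fun q : Q => closedBall p (q.1 : ℝ))) :=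
    isCompact_univ_pi fun q => isCompact_closedBall p _
  obtain ⟨f, _hfK, φ, hφ, hconv⟩ := hK.tendsto_subseq hmem
  have hfq : ∀ q : Q, Tendsto (fun k => g (φ k) q) atTop (𝓝 (f q)) := by
    intro q
    exact tendsto_pi_nhds.mp hconv q
  have hDφ : Tendsto (fun k => D (φ k)) atTop atTop := hDtop.comp hφ.tendsto_atTop
  -- f is isometric on rationals
  have hiso_f : ∀ q q' : Q, dist (f q) (f q') = |(q.1 : ℝ) - (q'.1 : ℝ)| := by
    intro q q'
    refine tendsto_nhds_unique ((hfq q).dist (hfq q')) ?_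
    have hev : (fun k => dist (g (φ k) q) (g (φ k) q'))
        =ᶠ[atTop] (fun _ => |(q.1 : ℝ) - (q'.1 : ℝ)|) := by
      filter_upwards [hDφ.eventually_ge_atTop (max (q.1 : ℝ) (q'.1 : ℝ))] with k hk
      have hq : min (q.1 : ℝ) (D (φ k)) = (q.1 : ℝ) :=
        min_eq_left ((le_max_left _ _).trans hk)
      have hq' : min (q'.1 : ℝ) (D (φ k)) = (q'.1 : ℝ) :=
        min_eq_left ((le_max_right _ _).trans hk)
      have h := hγiso (φ k) (q.1 : ℝ) ⟨q.2, (le_max_left _ _).trans hk⟩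
        (q'.1 : ℝ) ⟨q'.2, (le_max_right _ _).trans hk⟩
      simpa [g, hq, hq'] using h
    exact tendsto_const_nhds.congr' hev.symm
  -- f 0 = p
  have hq0 : (0 : ℝ) ≤ ((0 : ℚ) : ℝ) := by norm_num
  have hf0 : f ⟨0, hq0⟩ = p := by
    refine tendsto_nhds_unique (hfq ⟨0, hq0⟩) ?_
    have : ∀ k, g k ⟨0, hq0⟩ = p := by
      intro k
      have : min (((0:ℚ):ℝ)) (D k) = 0 := by
        rw [show (((0:ℚ):ℝ)) = 0 by norm_num]
        exact min_eq_left (hD0 k)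
      simp only [g, this, hγ0 k]
    simp only [this]
    exact tendsto_const_nhds
  -- horofunction identity on rationals
  have hxif : ∀ q : Q, ξ (f q) = ξ p - (q.1 : ℝ) := by
    intro q
    have h1 : Tendsto (fun k => dist (f q) (a (φ k)) - dist o (a (φ k))) atTop
        (𝓝 (ξ (f q))) := (hlim (f q)).comp hφ.tendsto_atTop
    have h2 : Tendsto (fun k => dist p (a (φ k)) - dist o (a (φ k)) - (q.1 : ℝ)) atTop
        (𝓝 (ξ p - (q.1 : ℝ))) :=
      ((hlim p).comp hφ.tendsto_atTop).sub tendsto_const_nhds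
    have hgto : Tendsto (fun k => dist (f q) (g (φ k) q)) atTop (𝓝 0) := by
      have := tendsto_iff_dist_tendsto_zero.mp (hfq q)
      simpa [dist_comm] using this
    have h3 : Tendsto (fun k => dist (f q) (a (φ k)) - dist p (a (φ k)) + (q.1 : ℝ)) atTop
        (𝓝 0) := by
      refine squeeze_zero_norm' ?_ hgto
      filter_upwards [hDφ.eventually_ge_atTop (q.1 : ℝ)] with k hk
      have hga : dist (g (φ k) q) (a (φ k)) = D (φ k) - (q.1 : ℝ) := by
        have h := hγiso (φ k) (q.1 : ℝ) ⟨q.2, hk⟩ (D (φ k)) ⟨hD0 _, le_refl _⟩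
        rw [hγD (φ k)] at h
        have habs : |(q.1 : ℝ) - D (φ k)| = D (φ k) - (q.1 : ℝ) := by
          rw [abs_sub_comm]; exact abs_of_nonneg (by linarith)
        simpa [g, min_eq_left hk, habs] using h
      have : dist (f q) (a (φ k)) - dist p (a (φ k)) + (q.1 : ℝ)
          = dist (f q) (a (φ k)) - dist (g (φ k) q) (a (φ k)) := by
        rw [hga]; ring
      rw [Real.norm_eq_abs, this]
      exact abs_dist_sub_le _ _ _
    have h4 : Tendsto (fun k => dist (f q) (a (φ k)) - dist o (a (φ k))) atTop
        (𝓝 (ξ p - (q.1 : ℝ) + 0)) := by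
      refine (h2.add h3).congr fun k => by ring
    have := tendsto_nhds_unique h1 h4
    simpa using this
  -- ξ is 1-Lipschitz, hence continuous
  have hLip : ∀ z w : X, |ξ z - ξ w| ≤ dist z w := by
    intro z w
    have h : Tendsto (fun k => |dist z (a k) - dist o (a k)
        - (dist w (a k) - dist o (a k))|) atTop (𝓝 |ξ z - ξ w|) :=
      ((hlim z).sub (hlim w)).abs
    refine le_of_tendsto h (Filter.Eventually.of_forall fun k => ?_)
    have he : dist z (a k) - dist o (a k) - (dist w (a k) - dist o (a k))
        = dist z (a k) - dist w (a k) := by ring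
    rw [he]
    exact abs_dist_sub_le _ _ _
  have hcont : Continuous ξ := by
    have : LipschitzWith 1 ξ := by
      refine LipschitzWith.of_dist_le_mul fun z w => ?_
      rw [Real.dist_eq]
      simpa using hLip z w
    exact this.continuous
  -- rational approximations from above
  have hrat : ∀ (s : ℝ) (n : ℕ), ∃ q : ℚ, max s 0 < (q : ℝ) ∧ (q : ℝ) < max s 0 + 1/(n+1) := by
    intro s n
    exact exists_rat_btwn (lt_add_of_pos_right _ (by positivity))
  choose r hr1 hr2 using hrat
  have hrnn : ∀ (s : ℝ) (n : ℕ), (0 : ℝ) ≤ ((r s n : ℚ) : ℝ) := fun s n =>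
    le_of_lt (lt_of_le_of_lt (le_max_right s 0) (hr1 s n))
  let qs : ℝ → ℕ → Q := fun s n => ⟨r s n, hrnn s n⟩
  have hrt : ∀ s : ℝ, Tendsto (fun n => ((r s n : ℚ) : ℝ)) atTop (𝓝 (max s 0)) := by
    intro s
    have hub : Tendsto (fun n : ℕ => max s 0 + 1/((n:ℝ)+1)) atTop (𝓝 (max s 0 + 0)) :=
      tendsto_const_nhds.add tendsto_one_div_add_atTop_nhds_zero_nat
    rw [add_zero] at hub
    exact tendsto_of_tendsto_of_tendsto_of_le_of_le tendsto_const_nhds hub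
      (fun n => le_of_lt (hr1 s n)) (fun n => le_of_lt (hr2 s n))
  let F : ℝ → ℕ → X := fun s n => f (qs s n)
  have hF : ∀ s, CauchySeq (F s) := by
    intro s
    rw [Metric.cauchySeq_iff]
    intro ε hε
    obtain ⟨N, hN⟩ := Metric.cauchySeq_iff.mp (hrt s).cauchySeq ε hε
    refine ⟨N, fun m hm n hn => ?_⟩
    have he : dist (F s m) (F s n) = dist ((r s m : ℝ)) ((r s n : ℝ)) := by
      rw [Real.dist_eq]
      exact hiso_f _ _
    rw [he]
    exact hN m hm n hn
  let γr : ℝ → X := fun s => (cauchySeq_tendsto_of_complete (hF s)).choose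
  have hγr : ∀ s, Tendsto (F s) atTop (𝓝 (γr s)) := fun s =>
    (cauchySeq_tendsto_of_complete (hF s)).choose_spec
  have hdγf : ∀ (s : ℝ) (q : Q), dist (γr s) (f q) = |max s 0 - (q.1 : ℝ)| := by
    intro s q
    refine tendsto_nhds_unique ((hγr s).dist tendsto_const_nhds) ?_
    have h := ((hrt s).sub (tendsto_const_nhds : Tendsto (fun _ : ℕ => (q.1 : ℝ)) _ _)).abs
    exact h.congr fun n => (hiso_f (qs s n) q).symm
  have hdγγ : ∀ s t : ℝ, dist (γr s) (γr t) = |max s 0 - max t 0| := by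
    intro s t
    refine tendsto_nhds_unique (tendsto_const_nhds.dist (hγr t)) ?_
    have h := ((tendsto_const_nhds : Tendsto (fun _ : ℕ => max s 0) _ _).sub (hrt t)).abs
    refine h.congr fun n => ?_
    rw [← hdγf s (qs t n)]
  have hγ0p : γr 0 = p := by
    have h := hdγf 0 ⟨0, hq0⟩
    rw [hf0] at h
    simp only [max_self, Rat.cast_zero, sub_zero, abs_zero] at h
    exact dist_eq_zero.mp h
  have hxiγ : ∀ s : ℝ, ξ (γr s) = ξ p - max s 0 := by
    intro s
    refine tendsto_nhds_unique ((hcont.tendsto _).comp (hγr s)) ?_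
    have h := (tendsto_const_nhds : Tendsto (fun _ : ℕ => ξ p) _ _).sub (hrt s)
    exact h.congr fun n => (hxif (qs s n)).symm
  refine ⟨γr, hγ0p, fun s t hs ht => ?_, fun s hs => ?_⟩
  · simpa [max_eq_left hs, max_eq_left ht] using hdγγ s t
  · simpa [max_eq_left hs] using hxiγ s
end

section
/- Let X be a proper geodesic metric space with base point o, let G be a group acting on X by isometries, and let D > 0 be such that every point of X lies within distance D of the orbit G·o, and such that π(R) := #{g ∈ G : d(o, g·o) ≤ R} is finite for every R ≥ 0. Then π(R + S) ≤ π(R + D) · π(S + D) for all R, S ≥ 0. -/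
open scoped Pointwise

/-!
Call `d(o, g·o)` the length of `g`. Given `g` of length at most `R + S`, walk a distance
`min R d(o, g·o)` along a geodesic from `o` to `g·o` and pick an orbit point `h·o` within `D`
of the point reached. Then `h` has length at most `R + D`, and since `G` acts by isometries,
`h⁻¹g` has length `d(h·o, g·o) ≤ S + D`. Hence the ball of radius `R + S` in `G` lies in the
product of the balls of radii `R + D` and `S + D`, and `#(A * B) ≤ #A · #B`.
-/

lemma exists_dist_eq_and_dist_eq_sub_of_geodesic {X : Type*} [PseudoMetricSpace X] {p q : X}
    (hpq : ∃ γ : ℝ → X, γ 0 = p ∧ γ (dist p q) = q ∧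
      ∀ s ∈ Set.Icc 0 (dist p q), ∀ t ∈ Set.Icc 0 (dist p q), dist (γ s) (γ t) = |s - t|)
    {t : ℝ} (ht₀ : 0 ≤ t) (ht : t ≤ dist p q) :
    ∃ z, dist p z = t ∧ dist z q = dist p q - t := by
  obtain ⟨γ, hγ₀, hγ₁, hγ⟩ := hpq
  have hpq₀ : 0 ≤ dist p q := dist_nonneg
  refine ⟨γ t, ?_, ?_⟩
  · rw [← hγ₀, hγ 0 ⟨le_rfl, hpq₀⟩ t ⟨ht₀, ht⟩, abs_sub_comm, sub_zero, abs_of_nonneg ht₀]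
  · have := hγ t ⟨ht₀, ht⟩ _ ⟨hpq₀, le_rfl⟩
    rwa [hγ₁, abs_sub_comm, abs_of_nonneg (sub_nonneg.2 ht)] at this

section OrbitBall

variable (G : Type*) {X : Type*} [Group G] [PseudoMetricSpace X] [MulAction G X]

/-- The orbit counting function of the paper is `π(R) = (orbitBall G o R).ncard`. -/
def orbitBall (o : X) (R : ℝ) : Set G := {g | dist o (g • o) ≤ R}

variable {G} [IsIsometricSMul G X]

lemma dist_inv_mul_smul (o : X) (g h : G) : dist o ((h⁻¹ * g) • o) = dist (h • o) (g • o) := by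
  rw [← dist_smul h, smul_smul, mul_inv_cancel_left]

lemma orbitBall_add_subset_mul {o : X} {D R S : ℝ}
    (hgeo : ∀ q : X, ∃ γ : ℝ → X, γ 0 = o ∧ γ (dist o q) = q ∧
      ∀ s ∈ Set.Icc 0 (dist o q), ∀ t ∈ Set.Icc 0 (dist o q), dist (γ s) (γ t) = |s - t|)
    (hnet : ∀ x : X, ∃ g : G, dist x (g • o) ≤ D) (hR : 0 ≤ R) (hS : 0 ≤ S) :
    orbitBall G o (R + S) ⊆ orbitBall G o (R + D) * orbitBall G o (S + D) := by
  intro g hg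
  obtain ⟨z, hoz, hzg⟩ := exists_dist_eq_and_dist_eq_sub_of_geodesic (hgeo (g • o))
    (le_min hR dist_nonneg) (min_le_right R _)
  have hzg' : dist z (g • o) ≤ S := by
    rw [hzg]; have : dist o (g • o) ≤ R + S := hg; grind
  obtain ⟨h, hzh⟩ := hnet z
  refine ⟨h, ?_, h⁻¹ * g, ?_, mul_inv_cancel_left h g⟩
  · calc dist o (h • o) ≤ dist o z + dist z (h • o) := dist_triangle _ _ _
      _ ≤ R + D := by rw [hoz]; linarith [min_le_left R (dist o (g • o))]
  · calc dist o ((h⁻¹ * g) • o) = dist (h • o) (g • o) := dist_inv_mul_smul o g h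
      _ ≤ dist (h • o) z + dist z (g • o) := dist_triangle _ _ _
      _ ≤ S + D := by rw [dist_comm]; linarith

end OrbitBall

theorem orbit_counting_submultiplicative_general {X : Type*} [MetricSpace X]
    (o : X)
    (hgeo : ∀ p q : X, ∃ γ : ℝ → X, γ 0 = p ∧ γ (dist p q) = q ∧
      ∀ s ∈ Set.Icc 0 (dist p q), ∀ t ∈ Set.Icc 0 (dist p q),
        dist (γ s) (γ t) = |s - t|)
    {G : Type*} [Group G] [MulAction G X]
    (hiso : ∀ g : G, Isometry (fun x : X => g • x))
    (D : ℝ)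
    (hnet : ∀ x : X, ∃ g : G, dist x (g • o) ≤ D)
    (hfin : ∀ R : ℝ, 0 ≤ R → {g : G | dist o (g • o) ≤ R}.Finite) :
    ∀ R S : ℝ, 0 ≤ R → 0 ≤ S →
      {g : G | dist o (g • o) ≤ R + S}.ncard ≤
        {g : G | dist o (g • o) ≤ R + D}.ncard * {g : G | dist o (g • o) ≤ S + D}.ncard := by
  intro R S hR hS
  have : IsIsometricSMul G X := ⟨hiso⟩
  obtain ⟨_, hoD⟩ := hnet o
  have hD : 0 ≤ D := dist_nonneg.trans hoD
  calc (orbitBall G o (R + S)).ncard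
      ≤ (orbitBall G o (R + D) * orbitBall G o (S + D)).ncard :=
        Set.ncard_le_ncard (orbitBall_add_subset_mul (hgeo o) hnet hR hS)
          ((hfin _ (by linarith)).mul (hfin _ (by linarith)))
    _ ≤ (orbitBall G o (R + D)).ncard * (orbitBall G o (S + D)).ncard := Set.natCard_mul_le

/-- Submultiplicativity of the orbit counting function: if every point of `X` is within
distance `D` of the orbit `G·o` and the orbit counting function
`π(R) = #{g : d(o, g·o) ≤ R}` is finite, then `π(R+S) ≤ π(R+D)·π(S+D)`. -/
theorem orbit_counting_submultiplicative {X : Type*} [MetricSpace X] [ProperSpace X]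
    (o : X)
    (hgeo : ∀ p q : X, ∃ γ : ℝ → X, γ 0 = p ∧ γ (dist p q) = q ∧
      ∀ s ∈ Set.Icc 0 (dist p q), ∀ t ∈ Set.Icc 0 (dist p q),
        dist (γ s) (γ t) = |s - t|)
    {G : Type*} [Group G] [MulAction G X]
    (hiso : ∀ g : G, Isometry (fun x : X => g • x))
    (D : ℝ) (hD : 0 < D)
    (hnet : ∀ x : X, ∃ g : G, dist x (g • o) ≤ D)
    (hfin : ∀ R : ℝ, 0 ≤ R → {g : G | dist o (g • o) ≤ R}.Finite) :
    ∀ R S : ℝ, 0 ≤ R → 0 ≤ S →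
      {g : G | dist o (g • o) ≤ R + S}.ncard ≤
        {g : G | dist o (g • o) ≤ R + D}.ncard * {g : G | dist o (g • o) ≤ S + D}.ncard :=
  orbit_counting_submultiplicative_general o hgeo hiso D hnet hfin
end

section
/- Let X be a metric space with base point o, let G be a countable group acting freely on X by isometries, let μ be a G-invariant Borel measure on X, and let M₀ ⊆ X be a Borel fundamental domain for the action (the translates g·M₀, g ∈ G, are pairwise disjoint and cover X). Suppose 0 < d < D are such that the open ball B(o, d) is contained in M₀ and M₀ is contained in B(o, D). Then for every R ≥ 0: (i) π(R) · μ(B(o, d)) ≤ μ(B(o, R + d)), and (ii) μ(B(o, R)) ≤ π(R + D) · μ(M₀), where π(R) = #{g ∈ G : d(o, g·o) ≤ R}. -/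
open Filter Metric Topology MeasureTheory ENNReal Pointwise

/-!
The translates `g • B(o, d)` with `d(o, g·o) ≤ R` are disjoint, all have measure
`μ(B(o, d))` and lie in `B(o, R + d)`; conversely `B(o, R)` is covered by the translates
`g • M₀` that meet it, and each of those has `d(o, g·o) < R + D` and measure `μ(M₀)`.
-/

section Translates

variable {G X : Type*} [Group G] [MulAction G X] [Countable G] [MeasurableSpace X]
  {μ : Measure X} [SMulInvariantMeasure G X μ]

theorem encard_mul_measure_eq_measure_biUnion_smul [MeasurableConstSMul G X] {S : Set G}
    {s : Set X} (hs : MeasurableSet s) (hS : S.PairwiseDisjoint (· • s)) :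
    (S.encard : ℝ≥0∞) * μ s = μ (⋃ g ∈ S, g • s) := by
  rw [measure_biUnion S.to_countable hS fun g _ => hs.const_smul g]
  simp only [measure_smul, ENNReal.tsum_set_const]

theorem measure_biUnion_smul_le_encard_mul (S : Set G) (s : Set X) :
    μ (⋃ g ∈ S, g • s) ≤ S.encard * μ s :=
  calc μ (⋃ g ∈ S, g • s) ≤ ∑' g : S, μ ((g : G) • s) := measure_biUnion_le μ S.to_countable _
    _ = S.encard * μ s := by simp only [measure_smul, ENNReal.tsum_set_const]

end Translates

section IsometricAction

variable {G X : Type*} [Group G] [PseudoMetricSpace X] [MulAction G X] [IsIsometricSMul G X]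

theorem biUnion_smul_ball_subset_ball (o : X) (R r : ℝ) :
    ⋃ g ∈ {g : G | dist o (g • o) ≤ R}, g • ball o r ⊆ ball o (R + r) := by
  simp only [Set.iUnion_subset_iff, Metric.smul_ball]
  intro g hg x hx
  rw [mem_ball'] at hx ⊢
  linarith [dist_triangle o (g • o) x, hg.out]

theorem ball_subset_biUnion_smul_of_iUnion_eq_univ {M : Set X} {o : X} {D : ℝ}
    (hcover : ⋃ g : G, g • M = Set.univ) (hM : M ⊆ ball o D) (R : ℝ) :
    ball o R ⊆ ⋃ g ∈ {g : G | dist o (g • o) ≤ R + D}, g • M := by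
  intro x hx
  obtain ⟨g, m, hm, rfl⟩ := Set.mem_iUnion.mp (hcover.symm ▸ Set.mem_univ x)
  have hmo : dist (g • m) (g • o) < D := by rw [dist_smul]; exact hM hm
  have hxo : dist o (g • m) < R := mem_ball'.mp hx
  refine Set.mem_biUnion (x := g) ?_ (Set.smul_mem_smul_set hm)
  show dist o (g • o) ≤ R + D
  linarith [dist_triangle o (g • m) (g • o)]

end IsometricAction

theorem orbit_counting_volume_bounds_general {X : Type*} [MetricSpace X]
    [MeasurableSpace X] [BorelSpace X]
    (o : X) {G : Type*} [Group G] [Countable G] [MulAction G X]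
    (hiso : ∀ g : G, Isometry (fun x : X => g • x))
    (μ : Measure X)
    (hinv : ∀ g : G, Measure.map (fun x : X => g • x) μ = μ)
    (M₀ : Set X)
    (hdisj : ∀ g h : G, g ≠ h → Disjoint (g • M₀) (h • M₀))
    (hcover : ⋃ g : G, g • M₀ = Set.univ)
    (d D : ℝ)
    (hball : Metric.ball o d ⊆ M₀) (hM₀D : M₀ ⊆ Metric.ball o D) :
    ∀ R : ℝ, 0 ≤ R →
      ({g : G | dist o (g • o) ≤ R}.encard : ℝ≥0∞) * μ (Metric.ball o d) ≤
          μ (Metric.ball o (R + d)) ∧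
      μ (Metric.ball o R) ≤
          ({g : G | dist o (g • o) ≤ R + D}.encard : ℝ≥0∞) * μ M₀ := by
  have : IsIsometricSMul G X := ⟨hiso⟩
  have : SMulInvariantMeasure G X μ := ((smulInvariantMeasure_tfae G μ).out 0 5).2 hinv
  intro R _
  have hball_disj : Set.univ.PairwiseDisjoint fun g : G => g • ball o d :=
    fun g _ h _ hgh => (hdisj g h hgh).mono (Set.smul_set_mono hball) (Set.smul_set_mono hball)
  refine ⟨?_, ?_⟩
  · rw [encard_mul_measure_eq_measure_biUnion_smul measurableSet_ball (hball_disj.subset (by simp))]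
    exact measure_mono (biUnion_smul_ball_subset_ball o R d)
  · exact (measure_mono (ball_subset_biUnion_smul_of_iUnion_eq_univ hcover hM₀D R)).trans
      (measure_biUnion_smul_le_encard_mul _ _)

/-- Orbit counting vs. volume: if `G` acts freely by isometries on `X` preserving the
Borel measure `μ`, with Borel fundamental domain `M₀` satisfying
`B(o,d) ⊆ M₀ ⊆ B(o,D)`, then for every `R ≥ 0`,
(i) `π(R)·μ(B(o,d)) ≤ μ(B(o,R+d))` and (ii) `μ(B(o,R)) ≤ π(R+D)·μ(M₀)`,
where `π(R) = #{g : d(o, g·o) ≤ R}`. -/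
theorem orbit_counting_volume_bounds {X : Type*} [MetricSpace X]
    [MeasurableSpace X] [BorelSpace X]
    (o : X) {G : Type*} [Group G] [Countable G] [MulAction G X]
    (hiso : ∀ g : G, Isometry (fun x : X => g • x))
    (hfree : ∀ g : G, g ≠ 1 → ∀ x : X, g • x ≠ x)
    (μ : Measure X)
    (hinv : ∀ g : G, Measure.map (fun x : X => g • x) μ = μ)
    (M₀ : Set X) (hM₀ : MeasurableSet M₀)
    (hdisj : ∀ g h : G, g ≠ h → Disjoint (g • M₀) (h • M₀))
    (hcover : ⋃ g : G, g • M₀ = Set.univ)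
    (d D : ℝ) (hd : 0 < d) (hdD : d < D)
    (hball : Metric.ball o d ⊆ M₀) (hM₀D : M₀ ⊆ Metric.ball o D) :
    ∀ R : ℝ, 0 ≤ R →
      ({g : G | dist o (g • o) ≤ R}.encard : ℝ≥0∞) * μ (Metric.ball o d) ≤
          μ (Metric.ball o (R + d)) ∧
      μ (Metric.ball o R) ≤
          ({g : G | dist o (g • o) ≤ R + D}.encard : ℝ≥0∞) * μ M₀ :=
  orbit_counting_volume_bounds_general o hiso μ hinv M₀ hdisj hcover d D hball hM₀D
end

section
/- Let G be a countable set, let D : G → [0, ∞), and let v ∈ (0, ∞) be the critical exponent of the series Σ_{g ∈ G} e^{−s·D(g)}, i.e. the series converges for every s > v and diverges for every s < v. Then there exists a continuous, nondecreasing function h : (0, ∞) → (0, ∞) such that: (1) the series Σ_{g ∈ G} e^{−s·D(g)} · h(e^{D(g)}) converges for every s > v and diverges for every s ≤ v; and (2) for every ε > 0 there exists r₀ such that for all r > r₀ and all t > 1, h(r·t) ≤ t^ε · h(r). -/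
open Filter Metric Topology

/-- Patterson's lemma: given a countable family of weights `D : G → [0,∞)` whose
exponential series `Σ_g e^{−s D(g)}` has critical exponent `v ∈ (0,∞)`, there is a
continuous nondecreasing `h : (0, ∞) → (0, ∞)` such that the modified series
`Σ_g e^{−s D(g)} h(e^{D(g)})` converges for `s > v` and diverges for `s ≤ v`, and
for every `ε > 0` there is `r₀` with `h(rt) ≤ t^ε h(r)` for all `r > r₀`, `t > 1`. -/
theorem patterson_lemma {G : Type*} [Countable G] (D : G → ℝ) (hD : ∀ g, 0 ≤ D g)
    (v : ℝ) (hv : 0 < v)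
    (hconv : ∀ s : ℝ, v < s → Summable fun g : G => Real.exp (-s * D g))
    (hdiv : ∀ s : ℝ, s < v → ¬ Summable fun g : G => Real.exp (-s * D g)) :
    ∃ h : ℝ → ℝ,
      ContinuousOn h (Set.Ioi (0 : ℝ)) ∧
      MonotoneOn h (Set.Ioi (0 : ℝ)) ∧
      (∀ r : ℝ, 0 < r → 0 < h r) ∧
      (∀ s : ℝ, v < s → Summable fun g : G => Real.exp (-s * D g) * h (Real.exp (D g))) ∧
      (∀ s : ℝ, s ≤ v → ¬ Summable fun g : G => Real.exp (-s * D g) * h (Real.exp (D g))) ∧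
      (∀ ε : ℝ, 0 < ε → ∃ r₀ : ℝ, ∀ r : ℝ, r₀ < r → ∀ t : ℝ, 1 < t →
        h (r * t) ≤ t ^ ε * h r) := by
  classical
  by_cases hcrit : Summable fun g : G => Real.exp (-v * D g)
  swap
  · -- if the series already diverges at `v`, the constant function works
    refine ⟨fun _ => 1, continuousOn_const, monotoneOn_const, fun r _ => one_pos, ?_, ?_, ?_⟩
    · intro s hs; simpa using hconv s hs
    · intro s hs hsum
      rcases lt_or_eq_of_le hs with h | h
      · exact hdiv s h (by simpa using hsum)
      · exact hcrit (by simpa [h] using hsum)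
    · intro ε hε
      exact ⟨0, fun r _ t ht => by
        rw [mul_one]; exact Real.one_le_rpow ht.le hε.le⟩
  -- sublevel sets are finite
  have hfin : ∀ T : ℝ, {g : G | D g ≤ T}.Finite := by
    intro T
    have h0 := hcrit.tendsto_cofinite_zero
    have h1 : ∀ᶠ g in Filter.cofinite, Real.exp (-v * D g) < Real.exp (-v * T) :=
      h0.eventually_lt_const (Real.exp_pos _)
    refine (Filter.eventually_cofinite.mp h1).subset ?_
    intro g (hg : D g ≤ T)
    simp only [Set.mem_setOf_eq, not_lt]
    exact Real.exp_le_exp.2 (by nlinarith)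
  -- unbounded partial sums beyond any threshold
  have hunb : ∀ n : ℕ, ∀ τ C : ℝ, ∃ F : Finset G,
      (∀ g ∈ F, τ ≤ D g) ∧ C ≤ ∑ g ∈ F, Real.exp (-(v - 1/(n+1)) * D g) := by
    intro n τ C
    set E : Set G := {g : G | D g < τ} with hE
    have hEfin : E.Finite := (hfin τ).subset fun g (hg : D g < τ) => le_of_lt hg
    have hns : ¬ Summable (fun x : ↑Eᶜ => Real.exp (-(v - 1/(n+1)) * D ↑x)) := by
      rw [show (fun x : ↑Eᶜ => Real.exp (-(v - 1/(n+1)) * D ↑x)) =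
        ((fun g : G => Real.exp (-(v - 1/(n+1)) * D g)) ∘ (↑)) from rfl,
        hEfin.summable_compl_iff]
      exact hdiv _ (by
        have : (0:ℝ) < 1/(n+1) := by positivity
        linarith)
    have h2 : ¬ ∀ F : Finset ↑Eᶜ, ∑ x ∈ F, Real.exp (-(v - 1/(n+1)) * D ↑x) ≤ C := by
      intro hall
      exact hns (summable_of_sum_le (fun x => (Real.exp_pos _).le) hall)
    push_neg at h2
    obtain ⟨F0, hF0⟩ := h2
    refine ⟨F0.map (Function.Embedding.subtype _), ?_, ?_⟩
    · intro g hg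
      simp only [Finset.mem_map, Function.Embedding.coe_subtype] at hg
      obtain ⟨⟨x, hx⟩, -, rfl⟩ := hg
      simpa [hE] using hx
    · rw [Finset.sum_map]
      exact hF0.le
  -- choice of the next threshold
  have key : ∀ n : ℕ, ∀ τ ψ : ℝ, ∃ (T : ℝ) (F : Finset G),
      τ + 1 ≤ T ∧ (∀ g ∈ F, τ ≤ D g ∧ D g < T) ∧
      1 ≤ ∑ g ∈ F, Real.exp (-v * D g) * Real.exp (ψ + (D g - τ) / (n+1)) := by
    intro n τ ψ
    obtain ⟨F, hF1, hF2⟩ := hunb n τ (Real.exp (τ / (n+1) - ψ))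
    have hm1 : τ ≤ max τ 0 := le_max_left τ 0
    have hm2 : (0:ℝ) ≤ max τ 0 := le_max_right τ 0
    refine ⟨max τ 0 + 2 + ∑ g ∈ F, D g, F, ?_, ?_, ?_⟩
    · have : (0:ℝ) ≤ ∑ g ∈ F, D g := Finset.sum_nonneg fun g _ => hD g
      linarith
    · intro g hg
      refine ⟨hF1 g hg, ?_⟩
      have h3 : D g ≤ ∑ g' ∈ F, D g' := Finset.single_le_sum (fun g' _ => hD g') hg
      linarith
    · have heq : ∀ g ∈ F, Real.exp (-v * D g) * Real.exp (ψ + (D g - τ) / (n+1))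
          = Real.exp (ψ - τ/(n+1)) * Real.exp (-(v - 1/(n+1)) * D g) := by
        intro g _
        rw [← Real.exp_add, ← Real.exp_add]
        congr 1
        have hne : ((n:ℝ)+1) ≠ 0 := by positivity
        field_simp
        ring
      rw [Finset.sum_congr rfl heq, ← Finset.mul_sum]
      calc (1:ℝ) = Real.exp (ψ - τ/(n+1)) * Real.exp (τ/(n+1) - ψ) := by
              rw [← Real.exp_add]; simp
        _ ≤ _ := by
              have := Real.exp_pos (ψ - τ/(n+1))
              exact mul_le_mul_of_nonneg_left hF2 this.le
  choose T F hT hF hS using key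
  -- the recursively defined thresholds and values
  set seq : ℕ → ℝ × ℝ := fun n => Nat.rec (motive := fun _ => ℝ × ℝ) ((1:ℝ), (0:ℝ))
    (fun m p => (T m p.1 p.2, p.2 + (T m p.1 p.2 - p.1) / (m+1))) n with hseq
  set τs : ℕ → ℝ := fun n => (seq n).1 with hτsdef
  set ψs : ℕ → ℝ := fun n => (seq n).2 with hψsdef
  have hτ0 : τs 0 = 1 := rfl
  have hψ0 : ψs 0 = 0 := rfl
  have hτsucc : ∀ n, τs (n+1) = T n (τs n) (ψs n) := fun n => rfl
  have hψsucc : ∀ n, ψs (n+1) = ψs n + (τs (n+1) - τs n) / (n+1) := fun n => rfl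
  have hstep : ∀ n, τs n + 1 ≤ τs (n+1) := by
    intro n; rw [hτsucc n]; exact hT n (τs n) (ψs n)
  have hτmono : StrictMono τs := strictMono_nat_of_lt_succ fun n => by
    have := hstep n; linarith
  have hτ1 : ∀ n, 1 ≤ τs n := by
    intro n
    induction n with
    | zero => rw [hτ0]
    | succ m ih => have := hstep m; linarith
  have hτge : ∀ n : ℕ, (n:ℝ) + 1 ≤ τs n := by
    intro n
    induction n with
    | zero => rw [hτ0]; norm_num
    | succ m ih => have := hstep m; push_cast; linarith
  -- the shells
  set Fs : ℕ → Finset G := fun n => F n (τs n) (ψs n) with hFsdef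
  have hFs : ∀ n, ∀ g ∈ Fs n, τs n ≤ D g ∧ D g < τs (n+1) := by
    intro n g hg
    have := hF n (τs n) (ψs n) g hg
    rwa [← hτsucc n] at this
  have hSs : ∀ n, 1 ≤ ∑ g ∈ Fs n, Real.exp (-v * D g) *
      Real.exp (ψs n + (D g - τs n) / (n+1)) := fun n => hS n (τs n) (ψs n)
  -- the piecewise-linear support lines
  set l : ℕ → ℝ → ℝ := fun n u => ψs n + (u - τs n) / (n+1) with hldef
  have hcross : ∀ n u, l (n+1) u = l n u + (τs (n+1) - u) * (1/(n+1) - 1/(n+2)) := by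
    intro n u
    have h1 : ((n:ℝ)+1) ≠ 0 := by positivity
    have h2 : ((n:ℝ)+2) ≠ 0 := by positivity
    simp only [hldef, hψsucc n]
    push_cast
    field_simp
    ring
  have hslopes : ∀ n : ℕ, (0:ℝ) ≤ 1/(n+1) - 1/(n+2) := by
    intro n
    have h1 : (0:ℝ) < (n:ℝ)+1 := by positivity
    rw [sub_nonneg]
    apply one_div_le_one_div_of_le h1
    linarith
  have hmono_up : ∀ n u, u ≤ τs (n+1) → l n u ≤ l (n+1) u := by
    intro n u hu
    rw [hcross n u]
    nlinarith [hslopes n]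
  have hmono_down : ∀ n u, τs (n+1) ≤ u → l (n+1) u ≤ l n u := by
    intro n u hu
    rw [hcross n u]
    nlinarith [hslopes n]
  have hlow : ∀ m u, τs m ≤ u → ∀ k, k ≤ m → l m u ≤ l k u := by
    intro m
    induction m with
    | zero => intro u _ k hk; interval_cases k; exact le_refl _
    | succ p ih =>
      intro u hu k hk
      rcases Nat.eq_or_lt_of_le hk with rfl | hk'
      · exact le_refl _
      · have h1 : l (p+1) u ≤ l p u := hmono_down p u hu
        have h2 : τs p ≤ u := le_trans (hτmono (Nat.lt_succ_self p)).le hu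
        exact le_trans h1 (ih u h2 k (Nat.lt_succ_iff.mp hk'))
  have hhigh : ∀ n u, u ≤ τs (n+1) → ∀ k, n ≤ k → l n u ≤ l k u := by
    intro n u hu k hk
    induction k, hk using Nat.le_induction with
    | base => exact le_refl _
    | succ p hp ih =>
      refine le_trans ih (hmono_up p u ?_)
      exact le_trans hu (hτmono.monotone (Nat.succ_le_succ hp))
  -- location of the minimum
  have hminloc : ∀ u, τs 0 ≤ u → ∃ m, τs m ≤ u ∧ u < τs (m+1) ∧ ∀ k, l m u ≤ l k u := by
    intro u hu
    have hex : ∃ n, u < τs n := by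
      obtain ⟨n, hn⟩ := exists_nat_gt u
      exact ⟨n, lt_of_lt_of_le (by linarith [hτge n] : u < (n:ℝ)+1) (hτge n)⟩
    set n0 := Nat.find hex with hn0
    have hspec : u < τs n0 := Nat.find_spec hex
    have hn0pos : n0 ≠ 0 := by
      intro h
      rw [h] at hspec
      exact absurd hu (not_le.mpr hspec)
    obtain ⟨m, hm⟩ := Nat.exists_eq_succ_of_ne_zero hn0pos
    have hspec' : u < τs (m+1) := by rw [← Nat.succ_eq_add_one, ← hm]; exact hspec
    have hmle : τs m ≤ u := not_lt.mp (Nat.find_min hex (by omega))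
    refine ⟨m, hmle, hspec', fun k => ?_⟩
    rcases le_total k m with hk | hk
    · exact hlow m u hmle k hk
    · exact hhigh m u hspec'.le k hk
  have hminex : ∀ u, ∃ m, ∀ k, l m u ≤ l k u := by
    intro u
    rcases le_total (τs 0) u with hu | hu
    · obtain ⟨m, _, _, hm⟩ := hminloc u hu
      exact ⟨m, hm⟩
    · have h01 : τs 0 ≤ τs 1 := (hτmono (Nat.lt_succ_self 0)).le
      exact ⟨0, fun k => hhigh 0 u (hu.trans h01) k (Nat.zero_le k)⟩
  -- the concave envelope
  set Φ : ℝ → ℝ := fun u => ⨅ n, l n u with hΦdef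
  have hbdd : ∀ u, BddBelow (Set.range fun n => l n u) := by
    intro u
    obtain ⟨m, hm⟩ := hminex u
    exact ⟨l m u, by rintro x ⟨k, rfl⟩; exact hm k⟩
  have hΦ_le : ∀ u n, Φ u ≤ l n u := fun u n => ciInf_le (hbdd u) n
  have hΦ_eq : ∀ u m, (∀ k, l m u ≤ l k u) → Φ u = l m u := fun u m hm =>
    le_antisymm (hΦ_le u m) (le_ciInf hm)
  have hl_mono : ∀ n : ℕ, Monotone (l n) := by
    intro n a b hab
    simp only [hldef]
    have h1 : (0:ℝ) < (n:ℝ)+1 := by positivity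
    have h2 : (a - τs n)/((n:ℝ)+1) ≤ (b - τs n)/((n:ℝ)+1) := by
      apply div_le_div_of_nonneg_right ?_ h1.le
      linarith
    linarith
  have hΦ_mono : Monotone Φ := by
    intro a b hab
    obtain ⟨m, hm⟩ := hminex b
    calc Φ a ≤ l m a := hΦ_le a m
      _ ≤ l m b := hl_mono m hab
      _ = Φ b := (hΦ_eq b m hm).symm
  have hΦ_lip : ∀ u w, Φ u ≤ Φ w + |u - w| := by
    intro u w
    obtain ⟨m, hm⟩ := hminex w
    have h1 : Φ u ≤ l m u := hΦ_le u m
    have h2 : l m u = l m w + (u - w)/((m:ℝ)+1) := by simp only [hldef]; ring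
    have hpos : (0:ℝ) < (m:ℝ)+1 := by positivity
    have hm1 : (1:ℝ) ≤ (m:ℝ)+1 := by
      have := Nat.cast_nonneg (α := ℝ) m; linarith
    have h3 : (u - w)/((m:ℝ)+1) ≤ |u - w| := by
      calc (u - w)/((m:ℝ)+1) ≤ |u - w|/((m:ℝ)+1) := by
            apply div_le_div_of_nonneg_right (le_abs_self _) hpos.le
        _ ≤ |u - w| := div_le_self (abs_nonneg _) hm1
    have h4 : Φ w = l m w := hΦ_eq w m hm
    calc Φ u ≤ l m u := h1
      _ = l m w + (u - w)/((m:ℝ)+1) := h2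
      _ ≤ l m w + |u - w| := by linarith [h3]
      _ = Φ w + |u - w| := by rw [h4]
  have hΦ_cont : Continuous Φ := by
    have hlip : LipschitzWith 1 Φ := by
      apply LipschitzWith.of_dist_le_mul
      intro x y
      rw [Real.dist_eq, Real.dist_eq, NNReal.coe_one, one_mul, abs_sub_le_iff]
      constructor
      · have := hΦ_lip x y; linarith
      · have := hΦ_lip y x; rw [abs_sub_comm] at this; linarith
    exact hlip.continuous
  have hΦ_shift : ∀ (N : ℕ) (u b : ℝ), τs N ≤ u → 0 ≤ b →
      Φ (u + b) ≤ Φ u + b/((N:ℝ)+1) := by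
    intro N u b hNu hb
    have hu0 : τs 0 ≤ u := le_trans (hτmono.monotone (Nat.zero_le N)) hNu
    obtain ⟨m, hm1, hm2, hm3⟩ := hminloc u hu0
    have hNm : N ≤ m := by
      by_contra hc
      push_neg at hc
      have : τs (m+1) ≤ τs N := hτmono.monotone (by omega : m+1 ≤ N)
      linarith
    have hmono' : b/((m:ℝ)+1) ≤ b/((N:ℝ)+1) := by
      apply div_le_div_of_nonneg_left hb (by positivity)
      have : (N:ℝ) ≤ (m:ℝ) := Nat.cast_le.mpr hNm
      linarith
    calc Φ (u+b) ≤ l m (u+b) := hΦ_le _ m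
      _ = l m u + b/((m:ℝ)+1) := by simp only [hldef]; ring
      _ = Φ u + b/((m:ℝ)+1) := by rw [hΦ_eq u m hm3]
      _ ≤ Φ u + b/((N:ℝ)+1) := by linarith
  -- the function h
  set hh : ℝ → ℝ := fun r => Real.exp (Φ (max (Real.log r) (τs 0))) with hhdef
  refine ⟨hh, ?_, ?_, fun r _ => Real.exp_pos _, ?_, ?_, ?_⟩
  · -- continuity
    have hmax_cont : ContinuousOn (fun r : ℝ => max (Real.log r) (τs 0)) (Set.Ioi 0) := by
      apply ContinuousOn.sup ?_ continuousOn_const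
      apply Real.continuousOn_log.mono
      intro x hx
      exact ne_of_gt hx
    exact (Real.continuous_exp.comp hΦ_cont).comp_continuousOn hmax_cont
  · -- monotonicity
    intro a ha b hb hab
    apply Real.exp_le_exp.mpr
    apply hΦ_mono
    exact max_le_max (Real.log_le_log ha hab) (le_refl _)
  · -- convergence for s > v
    intro s hs
    have hsv : 0 < s - v := sub_pos.mpr hs
    obtain ⟨N, hN⟩ := exists_nat_gt (1/(s - v))
    have hN' : 1/((N:ℝ)+1) < s - v := by
      have h1 : 1 < (N:ℝ) * (s - v) := by
        rw [div_lt_iff₀ hsv] at hN; linarith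
      rw [div_lt_iff₀ (by positivity : (0:ℝ) < (N:ℝ)+1)]
      nlinarith
    have hs' : v < s - 1/((N:ℝ)+1) := by linarith
    apply Summable.of_nonneg_of_le (fun g => by positivity)
      ?_ ((hconv _ hs').mul_left (Real.exp (ψs N)))
    intro g
    have hDg := hD g
    have h1 : Φ (max (D g) (τs 0)) ≤ l N (max (D g) (τs 0)) := hΦ_le _ N
    have h3 : l N (max (D g) (τs 0)) ≤ ψs N + D g/((N:ℝ)+1) := by
      simp only [hldef]
      have hτN : 1 ≤ τs N := hτ1 N
      have hm : max (D g) (τs 0) - τs N ≤ D g := by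
        rw [hτ0]
        have : max (D g) 1 ≤ D g + 1 := max_le (by linarith) (by linarith)
        linarith
      have hpos : (0:ℝ) < (N:ℝ)+1 := by positivity
      have := div_le_div_of_nonneg_right hm hpos.le
      linarith
    simp only [hhdef, Real.log_exp]
    rw [← Real.exp_add, ← Real.exp_add]
    apply Real.exp_le_exp.mpr
    have hexp : -(s - 1/((N:ℝ)+1)) * D g = -s * D g + D g/((N:ℝ)+1) := by ring
    rw [hexp]
    have hfinal := le_trans h1 h3
    linarith [hfinal]
  · -- divergence for s ≤ v
    intro s hs hsum
    set f : G → ℝ := fun g => Real.exp (-s * D g) * hh (Real.exp (D g)) with hfdef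
    have hf0 : ∀ g, 0 ≤ f g := by
      intro g
      simp only [hfdef, hhdef]
      positivity
    have hone : ∀ n, 1 ≤ ∑ g ∈ Fs n, f g := by
      intro n
      refine le_trans (hSs n) (Finset.sum_le_sum ?_)
      intro g hg
      obtain ⟨hg1, hg2⟩ := hFs n g hg
      have hDg := hD g
      have hτ0le : τs 0 ≤ D g := le_trans (hτmono.monotone (Nat.zero_le n)) hg1
      have hmax : max (Real.log (Real.exp (D g))) (τs 0) = D g := by
        rw [Real.log_exp]; exact max_eq_left hτ0le
      have hΦge : l n (D g) ≤ Φ (D g) := by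
        apply le_ciInf
        intro k
        rcases le_total k n with hk | hk
        · exact hlow n (D g) hg1 k hk
        · exact hhigh n (D g) hg2.le k hk
      simp only [hfdef, hhdef, hmax]
      have hle1 : Real.exp (-v * D g) ≤ Real.exp (-s * D g) :=
        Real.exp_le_exp.mpr (by nlinarith)
      have hle2 : Real.exp (ψs n + (D g - τs n)/((n:ℝ)+1)) ≤ Real.exp (Φ (D g)) := by
        apply Real.exp_le_exp.mpr
        exact hΦge
      exact mul_le_mul hle1 hle2 (Real.exp_pos _).le (Real.exp_pos _).le
    have hdisj : ∀ m n, m < n → Disjoint (Fs m) (Fs n) := by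
      intro m n hmn
      rw [Finset.disjoint_left]
      intro g hgm hgn
      have h1 := (hFs m g hgm).2
      have h2 := (hFs n g hgn).1
      have h3 : τs (m+1) ≤ τs n := hτmono.monotone hmn
      linarith
    have hbig : ∀ M : ℕ, (M:ℝ) ≤ ∑' g, f g := by
      intro M
      have hpd : (↑(Finset.range M) : Set ℕ).PairwiseDisjoint Fs := by
        intro a _ b _ hab
        rcases lt_or_gt_of_ne hab with h | h
        · exact hdisj a b h
        · exact (hdisj b a h).symm
      calc (M:ℝ) = ∑ _n ∈ Finset.range M, (1:ℝ) := by simp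
        _ ≤ ∑ n ∈ Finset.range M, ∑ g ∈ Fs n, f g :=
            Finset.sum_le_sum fun n _ => hone n
        _ = ∑ g ∈ (Finset.range M).biUnion Fs, f g := (Finset.sum_biUnion hpd).symm
        _ ≤ ∑' g, f g := Summable.sum_le_tsum _ (fun g _ => hf0 g) hsum
    obtain ⟨M, hM⟩ := exists_nat_gt (∑' g, f g)
    exact absurd (hbig M) (not_le.mpr hM)
  · -- the slow-variation property
    intro ε hε
    obtain ⟨N, hN⟩ := exists_nat_gt (1/ε)
    have hNε : 1/((N:ℝ)+1) ≤ ε := by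
      have h1 : 1 < ε * (N:ℝ) := by
        rw [div_lt_iff₀ hε] at hN; linarith
      rw [div_le_iff₀ (by positivity : (0:ℝ) < (N:ℝ)+1)]
      nlinarith
    refine ⟨Real.exp (τs N), ?_⟩
    intro r hr t ht
    have hr0 : 0 < r := lt_trans (Real.exp_pos _) hr
    have ht0 : 0 < t := lt_trans one_pos ht
    have hlogr : τs N ≤ Real.log r := (Real.le_log_iff_exp_le hr0).mpr hr.le
    have hlogt : 0 ≤ Real.log t := Real.log_nonneg ht.le
    have hτ0logr : τs 0 ≤ Real.log r := le_trans (hτmono.monotone (Nat.zero_le N)) hlogr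
    have hmul : Real.log (r * t) = Real.log r + Real.log t :=
      Real.log_mul (ne_of_gt hr0) (ne_of_gt ht0)
    have hmax1 : max (Real.log (r*t)) (τs 0) = Real.log r + Real.log t := by
      rw [hmul]; exact max_eq_left (by linarith)
    have hmax2 : max (Real.log r) (τs 0) = Real.log r := max_eq_left hτ0logr
    have hshift := hΦ_shift N (Real.log r) (Real.log t) hlogr hlogt
    simp only [hhdef, hmax1, hmax2]
    rw [Real.rpow_def_of_pos ht0, ← Real.exp_add]
    apply Real.exp_le_exp.mpr
    have h5 : Real.log t / ((N:ℝ)+1) ≤ Real.log t * ε := by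
      rw [div_eq_mul_one_div]
      exact mul_le_mul_of_nonneg_left hNε hlogt
    linarith
end
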